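/- Let B be a maximal computably enumerable set and let X, Y be disjoint computably enumerable sets with X ∪ Y = B such that neither X nor Y is computable. Then for every computably enumerable set W, the set W \ X is infinite if and only if the set W ∩ Y is infinite. -/

import Mathlib

/-!
Every `x ∈ W \ X` lies in `W ∩ Y` or in `W ∩ Bᶜ`. If `W \ X` is infinite but `W ∩ Y` finite,
maximality of `B` leaves only `Bᶜ ⊆* W`. Then `Yᶜ = X ∪ Bᶜ` agrees with the c.e. set `X ∪ W` up
to finitely many elements, so `Yᶜ` is c.e. and `Y` is computable by Post's theorem.
-/

def CEset (A : Set ℕ) : Prop := ∃ f : ℕ →. ℕ, Nat.Partrec f ∧ A = {x | (f x).Dom}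

def MaximalCE (B : Set ℕ) : Prop :=
  CEset B ∧ Bᶜ.Infinite ∧ ∀ W : Set ℕ, CEset W → (W ∩ Bᶜ).Finite ∨ (Bᶜ \ W).Finite

namespace REPred

variable {α : Type*} [Primcodable α] {p q : α → Prop}

protected theorem or (hp : REPred p) (hq : REPred q) : REPred fun a => p a ∨ q a := by
  obtain ⟨k, hk, hmem⟩ := Partrec.merge hp hq fun _ _ _ _ _ => rfl
  refine hk.dom_re.of_eq fun a => ?_
  simp [Part.dom_iff_mem, hmem]

protected theorem and (hp : REPred p) (hq : REPred q) : REPred fun a => p a ∧ q a := by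
  have hq' : Partrec₂ fun a (_ : Unit) => Part.assert (q a) fun _ => Part.some () :=
    (hq.comp Computable.fst).to₂
  refine (Partrec.bind hp hq').of_eq fun a => Part.ext fun u => ?_
  simp [Part.mem_assert_iff, Part.mem_bind_iff]

end REPred

theorem Set.Finite.computablePred_mem {α : Type*} [Primcodable α] {s : Set α} (hs : s.Finite) :
    ComputablePred (· ∈ s) :=
  ((Primrec.eq.exists_mem_list.comp (Primrec.const hs.toFinset.toList) Primrec.id).of_eq
    fun a => by simp).computablePred

theorem REPred.of_finite_symmDiff {α : Type*} [Primcodable α] {s t : Set α}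
    (ht : REPred (· ∈ t)) (hst : (symmDiff s t).Finite) : REPred (· ∈ s) := by
  have hre : REPred fun a => (a ∈ t ∧ a ∉ symmDiff s t) ∨ a ∈ symmDiff s t ∩ s :=
    (ht.and hst.computablePred_mem.not.to_re).or
      (hst.subset Set.inter_subset_left).computablePred_mem.to_re
  refine hre.of_eq fun a => ?_
  simp only [Set.mem_symmDiff, Set.mem_inter_iff]
  tauto

theorem ComputablePred.of_finite_symmDiff_compl {α : Type*} [Primcodable α] {s t : Set α}
    (hs : REPred (· ∈ s)) (ht : REPred (· ∈ t)) (hst : (symmDiff sᶜ t).Finite) :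
    ComputablePred (· ∈ s) :=
  ComputablePred.computable_iff_re_compl_re'.2 ⟨hs, ht.of_finite_symmDiff hst⟩

theorem ceset_iff_rePred {A : Set ℕ} : CEset A ↔ REPred (· ∈ A) := by
  constructor
  · rintro ⟨f, hf, rfl⟩
    exact (Partrec.nat_iff.2 hf).dom_re
  · intro h
    refine ⟨fun a => (Part.assert (a ∈ A) fun _ => Part.some ()).map fun _ => 0,
      Partrec.nat_iff.1 (h.map (Computable.const 0).to₂), ?_⟩
    ext x
    simp [Part.assert]

theorem diff_eq_inter_union_inter_compl_union {α : Type*} {X Y : Set α} (hdisj : Disjoint X Y)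
    (W : Set α) : W \ X = (W ∩ Y) ∪ (W ∩ (X ∪ Y)ᶜ) := by
  ext x
  have : x ∈ X → x ∉ Y := fun hx => Set.disjoint_left.1 hdisj hx
  simp only [Set.mem_sdiff, Set.mem_union, Set.mem_inter_iff, Set.mem_compl_iff]
  tauto

theorem symmDiff_compl_union_subset {α : Type*} {X Y : Set α} (hdisj : Disjoint X Y)
    (W : Set α) : symmDiff Yᶜ (X ∪ W) ⊆ (W ∩ Y) ∪ ((X ∪ Y)ᶜ \ W) := by
  intro x
  have : x ∈ X → x ∉ Y := fun hx => Set.disjoint_left.1 hdisj hx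
  simp only [Set.mem_symmDiff, Set.mem_union, Set.mem_inter_iff, Set.mem_compl_iff,
    Set.mem_sdiff]
  tauto

theorem maximal_split_diff_infinite_iff_inter_infinite_general
    (B X Y : Set ℕ) (hB : MaximalCE B) (hX : CEset X) (hY : CEset Y)
    (hdisj : Disjoint X Y) (hunion : X ∪ Y = B)
    (hYnc : ¬ ComputablePred (· ∈ Y)) :
    ∀ W : Set ℕ, CEset W → ((W \ X).Infinite ↔ (W ∩ Y).Infinite) := by
  subst hunion
  intro W hW
  have hsplit := diff_eq_inter_union_inter_compl_union hdisj W
  refine ⟨fun hinf => ?_, fun hinf => hsplit ▸ hinf.mono Set.subset_union_left⟩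
  by_contra hfin
  rw [Set.not_infinite] at hfin
  rcases hB.2.2 W hW with hsmall | hcofinite
  · exact hinf (hsplit ▸ hfin.union hsmall)
  · have hXW : REPred (· ∈ X ∪ W) := (ceset_iff_rePred.1 hX).or (ceset_iff_rePred.1 hW)
    exact hYnc <| ComputablePred.of_finite_symmDiff_compl (ceset_iff_rePred.1 hY) hXW <|
      (hfin.union hcofinite).subset (symmDiff_compl_union_subset hdisj W)

/-- If `B` is a maximal c.e. set split into disjoint c.e. sets `X`, `Y`, neither of which
is computable, then for every c.e. `W`, `W \ X` is infinite iff `W ∩ Y` is infinite. -/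
theorem maximal_split_diff_infinite_iff_inter_infinite
    (B X Y : Set ℕ) (hB : MaximalCE B) (hX : CEset X) (hY : CEset Y)
    (hdisj : Disjoint X Y) (hunion : X ∪ Y = B)
    (hXnc : ¬ ComputablePred (· ∈ X)) (hYnc : ¬ ComputablePred (· ∈ Y)) :
    ∀ W : Set ℕ, CEset W → ((W \ X).Infinite ↔ (W ∩ Y).Infinite) :=
  maximal_split_diff_infinite_iff_inter_infinite_general B X Y hB hX hY hdisj hunion hYnc
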